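/- arXiv:1707.04049 — 2 statements merged into one kernel-verified Lean document; each statement's English description precedes it below -/
import Mathlib

section
/- As e ranges over all oriented edges of the Bruhat–Tits tree of GL₂(K), the compact open sets U(e) form a basis for the topology of P¹(K). -/
/-!
STATEMENT 3: As `e` ranges over all oriented edges of the Bruhat–Tits tree of
`GL₂(K)`, the compact open sets `U(e)` form a basis for the topology of `P¹(K)`.

`K` is a non-archimedean local field, formalized as a field equipped with a
surjective (rank one, discrete) valuation `v : K → ℤₘ₀`; its ring of integers
is `O = {x : v x ≤ 1}`.  `P¹(K)` is the space of nonzero vectors of `K²` up to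
scaling, with the quotient topology.  The edges of the tree are the
`GL₂(K)`-translates `e_*·γ` of the standard edge, and
`U(e_*·γ) = {x : x·γ⁻¹ ∈ O}` where `O ⊂ P¹(K)` is the set of points with
integral affine coordinate.
-/

noncomputable section

namespace BT3

/-- The value group of a discrete valuation. -/
abbrev Zm0 := WithZero (Multiplicative ℤ)

variable (K : Type) [Field K] [Valued K Zm0]

/-- Nonzero vectors of `K²`. -/
abbrev PNZ := {v : Fin 2 → K // v ≠ 0}

/-- The projective line `P¹(K)`: nonzero vectors up to scaling. -/
abbrev P1 := Quot (fun v w : PNZ K => ∃ c : K, c ≠ 0 ∧ w.1 = c • v.1)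

/-- `P¹(K)` carries the quotient topology. -/
instance : TopologicalSpace (P1 K) :=
  TopologicalSpace.coinduced (Quot.mk _) inferInstance

/-- A vector `(w₀, w₁)` represents a point of the standard affinoid `O ⊂ P¹(K)`
iff `w₀ ≠ 0` and the affine coordinate `w₁/w₀` is integral, i.e. `v(w₁) ≤ v(w₀)`. -/
def IsIntegralVec (w : Fin 2 → K) : Prop :=
  w 0 ≠ 0 ∧ Valued.v (w 1) ≤ Valued.v (w 0)

/-- The compact open `U(e) ⊆ P¹(K)` attached to the oriented edge `e = e_*·γ`
of the Bruhat–Tits tree: the translate of `O` by `γ`. -/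
def Uset (γ : Matrix.GeneralLinearGroup (Fin 2) K) : Set (P1 K) :=
  {x | ∃ v : PNZ K, Quot.mk _ v = x ∧
    IsIntegralVec K (Matrix.vecMul v.1
      ((γ⁻¹ : Matrix.GeneralLinearGroup (Fin 2) K) : Matrix (Fin 2) (Fin 2) K))}

/-!
`U(γ)` is the image `γ·O` of the integral affine line under the Möbius map
`s ↦ [(1, s) γ]`, and it is open because its preimage in `K² ∖ 0` is cut out by the open
condition "`w γ⁻¹` has nonzero first coordinate and integral ratio". Every point of `P¹(K)` is
`γ·0` for some `γ`, and precomposing `γ` with `s ↦ c s` replaces `γ·O` by `γ·(cO)`, which lies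
in any given neighbourhood of `γ·0` once `v(c)` is small; surjectivity of `v` supplies such `c ≠ 0`.
-/

open Matrix Topology

lemma scaling_equivalence {F : Type} [Field F] :
    Equivalence (fun v w : PNZ F => ∃ c : F, c ≠ 0 ∧ w.1 = c • v.1) where
  refl _ := ⟨1, one_ne_zero, (one_smul _ _).symm⟩
  symm := by
    rintro v w ⟨c, hc, h⟩
    exact ⟨c⁻¹, inv_ne_zero hc, by rw [h, smul_smul, inv_mul_cancel₀ hc, one_smul]⟩
  trans := by
    rintro u v w ⟨c, hc, hv⟩ ⟨d, hd, hw⟩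
    exact ⟨d * c, mul_ne_zero hd hc, by rw [hw, hv, smul_smul]⟩

lemma isIntegralVec_smul_iff {c : K} (hc : c ≠ 0) (w : Fin 2 → K) :
    IsIntegralVec K (c • w) ↔ IsIntegralVec K w := by
  have hvc : 0 < Valued.v c := zero_lt_iff.mpr ((map_ne_zero _).mpr hc)
  simp only [IsIntegralVec, Pi.smul_apply, smul_eq_mul, map_mul, ne_eq, mul_eq_zero, hc,
    false_or, mul_le_mul_iff_right₀ hvc]

lemma isIntegralVec_iff (w : Fin 2 → K) :
    IsIntegralVec K w ↔ w 0 ≠ 0 ∧ Valued.v (w 1 / w 0) ≤ 1 := by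
  refine and_congr_right fun hw => ?_
  rw [map_div₀, div_le_one₀ (zero_lt_iff.mpr ((map_ne_zero _).mpr hw))]

lemma isOpen_setOf_isIntegralVec : IsOpen {w : Fin 2 → K | IsIntegralVec K w} := by
  have hdiv : ContinuousOn (fun w : Fin 2 → K => w 1 / w 0) {w | w 0 ≠ 0} :=
    (continuous_apply 1).continuousOn.div (continuous_apply 0).continuousOn fun _ hw => hw
  have hset : {w | IsIntegralVec K w} =
      {w | w 0 ≠ 0} ∩ (fun w => w 1 / w 0) ⁻¹' (Valued.v : Valuation K Zm0).integer :=
    Set.ext fun w => isIntegralVec_iff K w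
  rw [hset]
  exact hdiv.isOpen_inter_preimage (isOpen_ne_fun (continuous_apply 0) continuous_const)
    (Valued.isOpen_integer K)

lemma mem_Uset_iff (γ : GL (Fin 2) K) (v : PNZ K) :
    Quot.mk _ v ∈ Uset K γ ↔ IsIntegralVec K (v.1 ᵥ* (γ⁻¹ : GL (Fin 2) K)) := by
  refine ⟨?_, fun h => ⟨v, rfl, h⟩⟩
  rintro ⟨w, hwv, hw⟩
  obtain ⟨c, hc, hvw⟩ := (scaling_equivalence).eqvGen_iff.mp (Quot.eqvGen_exact hwv)
  rwa [hvw, smul_vecMul, isIntegralVec_smul_iff K hc]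

lemma isOpen_Uset (γ : GL (Fin 2) K) : IsOpen (Uset K γ) := by
  have hpre : Quot.mk _ ⁻¹' Uset K γ =
      {v : PNZ K | v.1 ᵥ* (γ⁻¹ : GL (Fin 2) K) ∈ {w | IsIntegralVec K w}} :=
    Set.ext (mem_Uset_iff K γ)
  rw [isOpen_coinduced, hpre]
  exact (isOpen_setOf_isIntegralVec K).preimage
    (continuous_subtype_val.matrix_vecMul continuous_const)

lemma vecMul_ne_zero_of_isUnit {n R : Type*} [Fintype n] [DecidableEq n] [CommRing R]
    {A : Matrix n n R} (hA : IsUnit A) {w : n → R} (hw : w ≠ 0) : w ᵥ* A ≠ 0 :=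
  fun h => hw (vecMul_injective_of_isUnit hA (h.trans (zero_vecMul A).symm))

/-- The point `γ·s = [(1, s) γ]` of `P¹`: for `γ = !![a, b; c, d]` its affine coordinate is
`(b + d s) / (a + c s)`, the Möbius action of the paper. -/
def mobius {F : Type} [Field F] (γ : GL (Fin 2) F) (s : F) : P1 F :=
  Quot.mk _ ⟨![1, s] ᵥ* (γ : Matrix (Fin 2) (Fin 2) F),
    vecMul_ne_zero_of_isUnit γ.isUnit (by simp)⟩

lemma continuous_mobius (γ : GL (Fin 2) K) : Continuous (mobius γ) := by
  refine continuous_coinduced_rng.comp (Continuous.subtype_mk ?_ _)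
  exact (continuous_const.matrixVecCons
    (continuous_id.matrixVecCons continuous_const)).matrix_vecMul continuous_const

lemma Uset_eq_image_mobius (γ : GL (Fin 2) K) :
    Uset K γ = mobius γ '' {s | Valued.v s ≤ 1} := by
  ext x
  induction x using Quot.ind with | mk w => ?_
  constructor
  · intro h
    set p := w.1 ᵥ* ((γ⁻¹ : GL (Fin 2) K) : Matrix (Fin 2) (Fin 2) K)
    obtain ⟨hp0, hp⟩ := (isIntegralVec_iff K p).mp ((mem_Uset_iff K γ w).mp h)
    have hp_smul : p 0 • ![1, p 1 / p 0] = p := by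
      ext i; fin_cases i <;> simp [mul_div_cancel₀ _ hp0]
    refine ⟨p 1 / p 0, hp, Quot.sound ⟨p 0, hp0, ?_⟩⟩
    rw [← smul_vecMul, hp_smul, vecMul_vecMul, ← Units.val_mul, inv_mul_cancel, Units.val_one,
      vecMul_one]
  · rintro ⟨s, hs, hsw⟩
    refine ⟨_, hsw, ?_⟩
    simpa [IsIntegralVec, vecMul_vecMul] using hs

lemma exists_det_ne_zero {F : Type} [Field F] {v : Fin 2 → F} (hv : v ≠ 0) :
    ∃ r : Fin 2 → F, (of ![v, r]).det ≠ 0 := by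
  by_cases h0 : v 0 = 0
  · have h1 : v 1 ≠ 0 := fun h1 => hv (funext fun i => by fin_cases i <;> assumption)
    exact ⟨Pi.single 0 1, by simpa [det_fin_two, h0]⟩
  · exact ⟨Pi.single 1 1, by simpa [det_fin_two]⟩

lemma exists_mobius_zero_eq {F : Type} [Field F] (x : P1 F) :
    ∃ γ : GL (Fin 2) F, mobius γ 0 = x := by
  induction x using Quot.ind with | mk v => ?_
  obtain ⟨r, hr⟩ := exists_det_ne_zero v.2
  refine ⟨GeneralLinearGroup.mkOfDetNeZero _ hr, congrArg _ (Subtype.ext ?_)⟩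
  ext i; fin_cases i <;> simp [vecMul, dotProduct, Fin.sum_univ_two]

lemma exists_mobius_eq_mobius_mul {F : Type} [Field F] (γ : GL (Fin 2) F) {c : F} (hc : c ≠ 0) :
    ∃ γ' : GL (Fin 2) F, ∀ s, mobius γ' s = mobius γ (c * s) := by
  refine ⟨GeneralLinearGroup.mkOfDetNeZero (diagonal ![1, c]) (by simpa) * γ, fun s => ?_⟩
  refine congrArg _ (Subtype.ext ?_)
  simp only [Units.val_mul, GeneralLinearGroup.val_mkOfDetNeZero, ← vecMul_vecMul]
  congr 1; ext i; fin_cases i <;> simp [vecMul_diagonal, mul_comm]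

lemma exists_ne_zero_valuation_le_subset (hv : Function.Surjective (Valued.v : K → Zm0))
    {s : Set K} (hs : s ∈ 𝓝 0) : ∃ c : K, c ≠ 0 ∧ {x | Valued.v x ≤ Valued.v c} ⊆ s := by
  obtain ⟨γ, hγ⟩ := Valued.mem_nhds_zero.mp hs
  set δ := MonoidWithZeroHom.ValueGroup₀.embedding γ.1
  have hδ : δ ≠ 0 := by simp [δ]
  obtain ⟨c, hc⟩ := hv (δ * WithZero.exp (-1))
  have hc0 : Valued.v c ≠ 0 := by simp [hc, hδ]
  have hcδ : Valued.v c < δ := by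
    rw [hc]
    refine mul_lt_of_lt_one_right (zero_lt_iff.mpr hδ) ?_
    rw [← WithZero.exp_zero, WithZero.exp_lt_exp]
    exact neg_one_lt_zero
  exact ⟨c, (map_ne_zero _).mp hc0, fun x hx =>
    hγ (Valued.v.restrict_lt_iff_lt_embedding.mpr (hx.trans_lt hcδ))⟩

/-- The sets `U(e)`, as `e` ranges over all oriented edges of the Bruhat–Tits
tree (equivalently over all `GL₂(K)`-translates of the standard edge), form a
basis for the topology of `P¹(K)`. -/
theorem isTopologicalBasis_Usets
    (hv : Function.Surjective (Valued.v : K → Zm0)) :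
    TopologicalSpace.IsTopologicalBasis
      {S : Set (P1 K) | ∃ γ : Matrix.GeneralLinearGroup (Fin 2) K, S = Uset K γ} := by
  refine TopologicalSpace.isTopologicalBasis_of_isOpen_of_nhds
    (by rintro _ ⟨γ, rfl⟩; exact isOpen_Uset K γ) fun x u hx hu => ?_
  obtain ⟨γ, rfl⟩ := exists_mobius_zero_eq x
  obtain ⟨c, hc, hcu⟩ := exists_ne_zero_valuation_le_subset K hv
    ((continuous_mobius K γ).continuousAt.preimage_mem_nhds (hu.mem_nhds hx))
  obtain ⟨γ', hγ'⟩ := exists_mobius_eq_mobius_mul γ hc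
  refine ⟨Uset K γ', ⟨γ', rfl⟩, ?_, ?_⟩
  · rw [Uset_eq_image_mobius]
    exact ⟨0, by simp, by rw [hγ', mul_zero]⟩
  · rw [Uset_eq_image_mobius]
    rintro _ ⟨s, hs, rfl⟩
    rw [hγ']
    exact hcu (by simpa using mul_le_of_le_one_right' hs)

end BT3
end
end

section
/- Let μ be a finitely additive M-valued measure on the compact opens of P¹(K) defined on the basis {U(e) : e ∈ E(T)} by μ(U(e)) = κ(e) for a harmonic cocycle κ. Then μ is well-defined and finitely additive: if U(e) = ⨆_{i=1}^{q} U(e_i) is the decomposition given by the q = N(𝔭) edges e_i ≠ ē with target equal to the source of e, then κ(e) = Σᵢ κ(e_i). -/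
/-!
STATEMENT 18: Let `μ` be the finitely additive `M`-valued measure on the
compact opens of `P¹(K)` defined on the basis `{U(e)}` by `μ(U(e)) = κ(e)`,
for a harmonic cocycle `κ` on the oriented edges of the Bruhat–Tits tree.
Then `μ` is well-defined and finitely additive: if
`U(e) = ⨆_{i=1}^{q} U(e_i)` is the decomposition given by the `q = N(𝔭)`
edges `e_i ≠ ē` with target equal to the source of `e`, then
`κ(e) = ∑ᵢ κ(e_i)`.

(Abstractly: for any harmonic cocycle `κ` — `κ(ē) = −κ(e)` and
`∑_{t(e')=v} κ(e') = 0` for every vertex `v` — and any edge `e`, the sum of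
`κ` over the edges `e' ≠ ē` with `t(e') = s(e)` equals `κ(e)`.)
-/

theorem harmonic_measure_finitely_additive
    {E V M : Type} [AddCommGroup M]
    (rev : E → E) (src tgt : E → V)
    (hsrc : ∀ e, src e = tgt (rev e))
    (κ : E → M)
    (hrev : ∀ e, κ (rev e) = - κ e)
    (hfin : ∀ v : V, {e | tgt e = v}.Finite)
    (hharm : ∀ v : V, ∑ᶠ e' ∈ {e' | tgt e' = v}, κ e' = 0) :
    ∀ e : E, ∑ᶠ e' ∈ {e' | tgt e' = src e ∧ e' ≠ rev e}, κ e' = κ e := by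
  intro e
  have hmem : rev e ∈ {e' | tgt e' = src e} := by
    simp [Set.mem_setOf_eq, hsrc e]
  have hset : {e' | tgt e' = src e} =
      insert (rev e) {e' | tgt e' = src e ∧ e' ≠ rev e} := by
    ext x
    by_cases hx : x = rev e <;> simp [Set.mem_setOf_eq, hx, hsrc e]
  have hS : {e' | tgt e' = src e ∧ e' ≠ rev e}.Finite :=
    (hfin (src e)).subset (fun x hx => hx.1)
  have hnot : rev e ∉ {e' | tgt e' = src e ∧ e' ≠ rev e} := by
    simp [Set.mem_setOf_eq]
  have h0 := hharm (src e)
  rw [hset, finsum_mem_insert _ hnot hS, hrev] at h0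
  exact (neg_add_eq_zero.mp h0).symm
end
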